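/- Let f be a set of natural numbers, d ≠ 0 a real constant, and suppose there is a constant C₀ > 0 such that |π_f(x) − d·∫_2^x dt/ln t| ≤ C₀·√x·ln x for all x ≥ 2. Let g : ℝ → ℝ be monotone with a continuous derivative on [2, ∞). Then there is a constant C > 0 such that for all x ≥ 2: |∑_{p prime, p ≤ x, p ∈ f} g(p) − d·∫_2^x g(t)/ln t dt| ≤ C·( |g(x)|·√x·ln x + ∫_2^x |g'(t)|·√t·ln t dt ). -/

import Mathlib

open Filter

/-- `primeCountIn f t` is the number of primes `p ≤ t` with `p ∈ f`. -/
noncomputable def primeCountIn (f : Set ℕ) (t : ℝ) : ℕ :=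
  {p : ℕ | p.Prime ∧ p ∈ f ∧ (p : ℝ) ≤ t}.ncard

open scoped Classical in
/-- `primeSumIn f g x` is the sum of `g p` over primes `p ≤ x` with `p ∈ f`. -/
noncomputable def primeSumIn (f : Set ℕ) (g : ℝ → ℝ) (x : ℝ) : ℝ :=
  ∑ p ∈ (Finset.range (⌊x⌋₊ + 1)).filter (fun p => p.Prime ∧ p ∈ f), g p

/-! Partial summation. With `E(t) = π_f(t) - d ∫_2^t ds / log s`, Abel summation for the sum
and integration by parts for the integral give
`∑_{p ≤ x} g(p) - d ∫_2^x g(t) / log t dt = g(x) E(x) - ∫_2^x g'(t) E(t) dt`,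
and bounding `|E(t)| ≤ C₀ √t log t` on both terms gives the claim with `C = C₀`. -/

open MeasureTheory intervalIntegral Set

open scoped Classical in
noncomputable def primeIndicator (f : Set ℕ) (k : ℕ) : ℝ :=
  if k.Prime ∧ k ∈ f then 1 else 0

lemma primeIndicator_nonneg (f : Set ℕ) (k : ℕ) : 0 ≤ primeIndicator f k := by
  unfold primeIndicator; split_ifs <;> norm_num

lemma primeCountIn_eq_sum_primeIndicator (f : Set ℕ) (t : ℝ) :
    (primeCountIn f t : ℝ) = ∑ k ∈ Finset.Icc 0 ⌊t⌋₊, primeIndicator f k := by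
  classical
  have hset : {p : ℕ | p.Prime ∧ p ∈ f ∧ (p : ℝ) ≤ t} =
      ↑((Finset.Icc 0 ⌊t⌋₊).filter (fun p => p.Prime ∧ p ∈ f)) := by
    ext p
    simp only [mem_ofPred_eq, Finset.coe_filter, Finset.mem_Icc, zero_le, true_and]
    constructor
    · rintro ⟨hp, hpf, hpt⟩
      exact ⟨(Nat.le_floor_iff' hp.ne_zero).2 hpt, hp, hpf⟩
    · rintro ⟨hpt, hp, hpf⟩
      exact ⟨hp, hpf, (Nat.le_floor_iff' hp.ne_zero).1 hpt⟩
  rw [primeCountIn, hset, ncard_coe_finset, Finset.card_filter]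
  push_cast
  rfl

lemma primeSumIn_eq_sum_mul_primeIndicator (f : Set ℕ) (g : ℝ → ℝ) (x : ℝ) :
    primeSumIn f g x = ∑ k ∈ Finset.Icc 0 ⌊x⌋₊, g k * primeIndicator f k := by
  classical
  rw [primeSumIn, Finset.sum_filter, Finset.range_eq_Ico, Finset.Ico_add_one_right_eq_Icc]
  refine Finset.sum_congr rfl fun k _ => ?_
  unfold primeIndicator
  split_ifs <;> simp

lemma monotone_primeCountIn (f : Set ℕ) : Monotone fun t => (primeCountIn f t : ℝ) := by
  intro s t hst
  simp only [primeCountIn_eq_sum_primeIndicator]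
  exact Finset.sum_le_sum_of_subset_of_nonneg
    (Finset.Icc_subset_Icc le_rfl (Nat.floor_le_floor hst)) fun k _ _ => primeIndicator_nonneg f k

lemma primeSumIn_eq_sub_integral {f : Set ℕ} {g g' : ℝ → ℝ} {x : ℝ} (hx : 2 ≤ x)
    (hg : ∀ t ∈ Icc 2 x, HasDerivAt g (g' t) t) (hg' : IntegrableOn g' (Icc 2 x)) :
    primeSumIn f g x = g x * primeCountIn f x - ∫ t in (2 : ℝ)..x, g' t * primeCountIn f t := by
  have hderiv : EqOn (deriv g) g' (Icc 2 x) := fun t ht => (hg t ht).deriv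
  have hc0 : primeIndicator f 0 = 0 := by simp [primeIndicator, Nat.not_prime_zero]
  have hc1 : primeIndicator f 1 = 0 := by simp [primeIndicator, Nat.not_prime_one]
  rw [primeSumIn_eq_sum_mul_primeIndicator, primeCountIn_eq_sum_primeIndicator,
    sum_mul_eq_sub_integral_mul₁ _ hc0 hc1 x (fun t ht => (hg t ht).differentiableAt)
      (hg'.congr_fun hderiv.symm measurableSet_Icc), integral_of_le hx]
  congr 1
  refine setIntegral_congr_fun measurableSet_Ioc fun t ht => ?_
  rw [hderiv (Ioc_subset_Icc_self ht), primeCountIn_eq_sum_primeIndicator]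

lemma integral_mul_eq_sub_integral_mul_primitive {g g' h : ℝ → ℝ} {a b : ℝ} (hab : a ≤ b)
    (hg : ∀ t ∈ Icc a b, HasDerivAt g (g' t) t) (hg' : IntervalIntegrable g' volume a b)
    (hh : ContinuousOn h (Icc a b)) :
    ∫ t in a..b, g t * h t = g b * (∫ t in a..b, h t) - ∫ t in a..b, g' t * ∫ s in a..t, h s := by
  have hprim : ∀ t ∈ Icc a b, HasDerivWithinAt (fun u => ∫ s in a..u, h s) (h t) (Icc a b) t := by
    intro t ht
    have := Fact.mk ht
    exact integral_hasDerivWithinAt_right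
      ((hh.mono (Icc_subset_Icc le_rfl ht.2)).intervalIntegrable_of_Icc ht.1)
      (hh.stronglyMeasurableAtFilter_nhdsWithin measurableSet_Icc t) (hh t ht)
  have := integral_mul_deriv_eq_deriv_mul_of_hasDerivWithinAt
    (fun t ht => (hg t ((uIcc_of_le hab) ▸ ht)).hasDerivWithinAt)
    (fun t ht => (uIcc_of_le hab).symm ▸ hprim t ((uIcc_of_le hab) ▸ ht)) hg'
    (hh.intervalIntegrable_of_Icc hab)
  rw [this, integral_same, mul_zero, sub_zero]

lemma abs_mul_sub_integral_sub_le {g g' P L B : ℝ → ℝ} {a x : ℝ} (d : ℝ) (hax : a ≤ x)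
    (hP : IntervalIntegrable (fun t => g' t * P t) volume a x)
    (hL : IntervalIntegrable (fun t => g' t * L t) volume a x)
    (hB : IntervalIntegrable (fun t => |g' t| * B t) volume a x)
    (hPL : ∀ t ∈ Icc a x, |P t - d * L t| ≤ B t) :
    |(g x * P x - ∫ t in a..x, g' t * P t) - d * (g x * L x - ∫ t in a..x, g' t * L t)| ≤
      |g x| * B x + ∫ t in a..x, |g' t| * B t := by
  have hPL_int : IntervalIntegrable (fun t => g' t * (P t - d * L t)) volume a x := by
    simpa only [mul_sub, mul_left_comm] using hP.sub (hL.const_mul d)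
  have hident : (g x * P x - ∫ t in a..x, g' t * P t) - d * (g x * L x - ∫ t in a..x, g' t * L t)
      = g x * (P x - d * L x) - ∫ t in a..x, g' t * (P t - d * L t) := by
    simp only [mul_sub, mul_left_comm _ d, integral_sub hP (hL.const_mul d),
      intervalIntegral.integral_const_mul]
    ring
  have hbound : |∫ t in a..x, g' t * (P t - d * L t)| ≤ ∫ t in a..x, |g' t| * B t := by
    refine (abs_integral_le_integral_abs hax).trans
      (integral_mono_on hax hPL_int.abs hB fun t ht => ?_)
    rw [abs_mul]
    exact mul_le_mul_of_nonneg_left (hPL t ht) (abs_nonneg _)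
  rw [hident]
  refine (abs_sub _ _).trans (add_le_add ?_ hbound)
  rw [abs_mul]
  exact mul_le_mul_of_nonneg_left (hPL x ⟨hax, le_rfl⟩) (abs_nonneg _)

theorem stmt11_general (f : Set ℕ) (d : ℝ) (C₀ : ℝ) (hC₀ : 0 < C₀)
    (hpi : ∀ x : ℝ, 2 ≤ x →
      |(primeCountIn f x : ℝ) - d * ∫ t in (2 : ℝ)..x, 1 / Real.log t| ≤
        C₀ * Real.sqrt x * Real.log x)
    (g g' : ℝ → ℝ)
    (hderiv : ∀ t ∈ Set.Ici (2 : ℝ), HasDerivAt g (g' t) t)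
    (hcont : ContinuousOn g' (Set.Ici (2 : ℝ))) :
    ∃ C : ℝ, 0 < C ∧ ∀ x : ℝ, 2 ≤ x →
      |primeSumIn f g x - d * ∫ t in (2 : ℝ)..x, g t / Real.log t| ≤
        C * (|g x| * Real.sqrt x * Real.log x +
          ∫ t in (2 : ℝ)..x, |g' t| * Real.sqrt t * Real.log t) := by
  refine ⟨C₀, hC₀, fun x hx => ?_⟩
  have hsub : Icc 2 x ⊆ Ici 2 := Icc_subset_Ici_self
  have hg : ∀ t ∈ Icc 2 x, HasDerivAt g (g' t) t := fun t ht => hderiv t (hsub ht)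
  have hg' : ContinuousOn g' (Icc 2 x) := hcont.mono hsub
  have hlog : ContinuousOn Real.log (Icc 2 x) :=
    Real.continuousOn_log.mono fun t ht => (show (0 : ℝ) < t by linarith [ht.1]).ne'
  have hinvlog : ContinuousOn (fun t => 1 / Real.log t) (Icc 2 x) :=
    continuousOn_const.div hlog fun t ht => (Real.log_pos (by linarith [ht.1])).ne'
  have hibp := integral_mul_eq_sub_integral_mul_primitive hx hg
    (hg'.intervalIntegrable_of_Icc hx) hinvlog
  simp only [mul_one_div] at hibp
  rw [primeSumIn_eq_sub_integral hx hg hg'.integrableOn_Icc, hibp]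
  calc _ ≤ |g x| * (C₀ * Real.sqrt x * Real.log x) +
        ∫ t in (2 : ℝ)..x, |g' t| * (C₀ * Real.sqrt t * Real.log t) := by
        refine abs_mul_sub_integral_sub_le d hx ?_ ?_ ?_ fun t ht => hpi t ht.1
        · exact (monotone_primeCountIn f).intervalIntegrable.continuousOn_mul
            (by rwa [uIcc_of_le hx])
        · refine (hg'.intervalIntegrable_of_Icc hx).mul_continuousOn ?_
          exact continuousOn_primitive_interval' (hinvlog.intervalIntegrable_of_Icc hx) left_mem_uIcc
        · refine ContinuousOn.intervalIntegrable_of_Icc hx ?_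
          exact hg'.abs.mul ((continuousOn_const.mul Real.continuous_sqrt.continuousOn).mul hlog)
    _ = C₀ * (|g x| * Real.sqrt x * Real.log x +
          ∫ t in (2 : ℝ)..x, |g' t| * Real.sqrt t * Real.log t) := by
        have hC : ∀ t, |g' t| * (C₀ * Real.sqrt t * Real.log t) =
            C₀ * (|g' t| * Real.sqrt t * Real.log t) := fun t => by ring
        simp only [hC, intervalIntegral.integral_const_mul]
        ring

theorem stmt11 (f : Set ℕ) (d : ℝ) (hd : d ≠ 0) (C₀ : ℝ) (hC₀ : 0 < C₀)
    (hpi : ∀ x : ℝ, 2 ≤ x →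
      |(primeCountIn f x : ℝ) - d * ∫ t in (2 : ℝ)..x, 1 / Real.log t| ≤
        C₀ * Real.sqrt x * Real.log x)
    (g g' : ℝ → ℝ)
    (hmono : MonotoneOn g (Set.Ici (2 : ℝ)) ∨ AntitoneOn g (Set.Ici (2 : ℝ)))
    (hderiv : ∀ t ∈ Set.Ici (2 : ℝ), HasDerivAt g (g' t) t)
    (hcont : ContinuousOn g' (Set.Ici (2 : ℝ))) :
    ∃ C : ℝ, 0 < C ∧ ∀ x : ℝ, 2 ≤ x →
      |primeSumIn f g x - d * ∫ t in (2 : ℝ)..x, g t / Real.log t| ≤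
        C * (|g x| * Real.sqrt x * Real.log x +
          ∫ t in (2 : ℝ)..x, |g' t| * Real.sqrt t * Real.log t) :=
  stmt11_general f d C₀ hC₀ hpi g g' hderiv hcont
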